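/- Lower bound in the limit (claim (5.5) in the proof of Lemma 5.1): Let p_m → p in ℝ^n with p ≠ 0 and let symmetric matrices M_m → M. Then liminf_{m→∞} Φ̃_m(p_m, M_m) ≥ −2 pᵀΣMΣp / |p|². -/

import Mathlib

open scoped RealInnerProductSpace
open Filter Topology

noncomputable section

namespace TugOfWar

/-- The quadratic form `vᵀ Σ M Σ v`, where `Σ = diag (σ 1, …, σ n)`. -/
def sigQF {n : ℕ} (σ : Fin n → ℝ) (M : Matrix (Fin n) (Fin n) ℝ)
    (v : EuclideanSpace ℝ (Fin n)) : ℝ :=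
  ∑ i, ∑ j, (σ i * v i) * M i j * (σ j * v j)

/-- `trace (Σ² M)`. -/
def trSig2 {n : ℕ} (σ : Fin n → ℝ) (M : Matrix (Fin n) (Fin n) ℝ) : ℝ :=
  ∑ i, σ i ^ 2 * M i i

/-- The integrand `Φ(θ⁺,θ⁻,d⁺,d⁻,p,M)`. -/
def Phi {n : ℕ} (σ : Fin n → ℝ) (μ : EuclideanSpace ℝ (Fin n))
    (θp θm : EuclideanSpace ℝ (Fin n)) (dp dm : ℝ)
    (p : EuclideanSpace ℝ (Fin n)) (M : Matrix (Fin n) (Fin n) ℝ) : ℝ :=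
  -(1 / 2) * sigQF σ M (θp - θm) - (1 / 2) * trSig2 σ M
    - (dp + dm) * ⟪θp + θm, p⟫ - ⟪μ, p⟫

/-- The control set `ℋ_m = S^{n-1} × [0, m]`. -/
def Hset (n : ℕ) (m : ℕ) : Set (EuclideanSpace ℝ (Fin n) × ℝ) :=
  {a | ‖a.1‖ = 1 ∧ a.2 ∈ Set.Icc (0 : ℝ) (m : ℝ)}

/-- `H_m⁺(ξ,p,M) = sup_{(θ⁻,d⁻)∈ℋ_m} inf_{(θ⁺,d⁺)∈ℋ_m} Φ + rξ`. -/
def Hplus {n : ℕ} (σ : Fin n → ℝ) (μ : EuclideanSpace ℝ (Fin n)) (r : ℝ) (m : ℕ)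
    (ξ : ℝ) (p : EuclideanSpace ℝ (Fin n)) (M : Matrix (Fin n) (Fin n) ℝ) : ℝ :=
  sSup ((fun a => sInf ((fun b => Phi σ μ b.1 a.1 b.2 a.2 p M) '' Hset n m)) '' Hset n m)
    + r * ξ

/-- `H_m⁻(ξ,p,M) = inf_{(θ⁺,d⁺)∈ℋ_m} sup_{(θ⁻,d⁻)∈ℋ_m} Φ + rξ`. -/
def Hminus {n : ℕ} (σ : Fin n → ℝ) (μ : EuclideanSpace ℝ (Fin n)) (r : ℝ) (m : ℕ)
    (ξ : ℝ) (p : EuclideanSpace ℝ (Fin n)) (M : Matrix (Fin n) (Fin n) ℝ) : ℝ :=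
  sInf ((fun b => sSup ((fun a => Phi σ μ b.1 a.1 b.2 a.2 p M) '' Hset n m)) '' Hset n m)
    + r * ξ

/-- The limit operator `F(ξ,p,M)`, for `p ≠ 0`. -/
def Fop {n : ℕ} (σ : Fin n → ℝ) (μ : EuclideanSpace ℝ (Fin n)) (r : ℝ)
    (ξ : ℝ) (p : EuclideanSpace ℝ (Fin n)) (M : Matrix (Fin n) (Fin n) ℝ) : ℝ :=
  (2 / ‖p‖ ^ 2) * sigQF σ M p + (1 / 2) * trSig2 σ M + ⟪μ, p⟫ - r * ξ

/-- `F^*(ξ,0,M) = limsup_{p → 0, p ≠ 0} F(ξ,p,M)`. -/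
def Fupper {n : ℕ} (σ : Fin n → ℝ) (μ : EuclideanSpace ℝ (Fin n)) (r : ℝ)
    (ξ : ℝ) (M : Matrix (Fin n) (Fin n) ℝ) : ℝ :=
  Filter.limsup (fun p => Fop σ μ r ξ p M) (𝓝[≠] (0 : EuclideanSpace ℝ (Fin n)))

/-- `F_*(ξ,0,M) = liminf_{p → 0, p ≠ 0} F(ξ,p,M)`. -/
def Flower {n : ℕ} (σ : Fin n → ℝ) (μ : EuclideanSpace ℝ (Fin n)) (r : ℝ)
    (ξ : ℝ) (M : Matrix (Fin n) (Fin n) ℝ) : ℝ :=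
  Filter.liminf (fun p => Fop σ μ r ξ p M) (𝓝[≠] (0 : EuclideanSpace ℝ (Fin n)))

/-- The parabolic domain `ℝ^n × [0,T]`. -/
def Dom (n : ℕ) (T : ℝ) : Set (EuclideanSpace ℝ (Fin n) × ℝ) :=
  Set.univ ×ˢ Set.Icc 0 T

/-- Test functions: `φ` is `C¹` in time with derivative `φt`, and `C²` in space with spatial
gradient `Dφ` and (symmetric) spatial Hessian `D2φ`, all jointly continuous. -/
def IsC12 {n : ℕ} (φ φt : EuclideanSpace ℝ (Fin n) → ℝ → ℝ)
    (Dφ : EuclideanSpace ℝ (Fin n) → ℝ → EuclideanSpace ℝ (Fin n))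
    (D2φ : EuclideanSpace ℝ (Fin n) → ℝ → Matrix (Fin n) (Fin n) ℝ) : Prop :=
  Continuous (fun q : EuclideanSpace ℝ (Fin n) × ℝ => φt q.1 q.2) ∧
  Continuous (fun q : EuclideanSpace ℝ (Fin n) × ℝ => Dφ q.1 q.2) ∧
  Continuous (fun q : EuclideanSpace ℝ (Fin n) × ℝ => D2φ q.1 q.2) ∧
  (∀ x t, HasDerivAt (fun s => φ x s) (φt x t) t) ∧
  (∀ x t, HasGradientAt (fun y => φ y t) (Dφ x t) x) ∧
  (∀ x t, HasFDerivAt (fun y => Dφ y t) (Matrix.toEuclideanCLM (𝕜 := ℝ) (D2φ x t)) x) ∧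
  (∀ x t, (D2φ x t).IsSymm)

/-- At most linear growth on `ℝ^n × [0,T]`. -/
def LinGrowth {n : ℕ} (T : ℝ) (u : EuclideanSpace ℝ (Fin n) → ℝ → ℝ) : Prop :=
  ∃ c : ℝ, ∀ x t, t ∈ Set.Icc 0 T → |u x t| ≤ c * (1 + ‖x‖)

/-- Continuity on `ℝ^n × [0,T]`. -/
def ContOn {n : ℕ} (T : ℝ) (u : EuclideanSpace ℝ (Fin n) → ℝ → ℝ) : Prop :=
  ContinuousOn (fun q : EuclideanSpace ℝ (Fin n) × ℝ => u q.1 q.2) (Dom n T)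

/-- The payoff `g` is positive, and `sup g + Lip(g) ≤ L`. -/
def PayoffOK {n : ℕ} (g : EuclideanSpace ℝ (Fin n) → ℝ) (L : ℝ) : Prop :=
  (∀ x, 0 < g x) ∧
  ∃ B K : ℝ, B + K ≤ L ∧ (∀ x, g x ≤ B) ∧ ∀ x y, |g x - g y| ≤ K * ‖x - y‖

/-- Viscosity supersolution of `∂ₜ u − H(u,Du,D²u) = 0` with terminal data `g`. -/
def SuperSolH {n : ℕ} (T : ℝ)
    (H : ℝ → EuclideanSpace ℝ (Fin n) → Matrix (Fin n) (Fin n) ℝ → ℝ)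
    (g : EuclideanSpace ℝ (Fin n) → ℝ) (u : EuclideanSpace ℝ (Fin n) → ℝ → ℝ) : Prop :=
  LowerSemicontinuousOn (fun q : EuclideanSpace ℝ (Fin n) × ℝ => u q.1 q.2) (Dom n T) ∧
  LinGrowth T u ∧
  (∀ x, g x ≤ u x T) ∧
  ∀ x₀ t₀, t₀ ∈ Set.Ioo 0 T →
    ∀ φ φt Dφ D2φ, IsC12 φ φt Dφ D2φ →
      u x₀ t₀ = φ x₀ t₀ →
      (∀ x t, t ∈ Set.Icc 0 T → (x, t) ≠ (x₀, t₀) → φ x t < u x t) →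
      φt x₀ t₀ ≤ H (u x₀ t₀) (Dφ x₀ t₀) (D2φ x₀ t₀)

/-- Viscosity subsolution of `∂ₜ u − H(u,Du,D²u) = 0` with terminal data `g`. -/
def SubSolH {n : ℕ} (T : ℝ)
    (H : ℝ → EuclideanSpace ℝ (Fin n) → Matrix (Fin n) (Fin n) ℝ → ℝ)
    (g : EuclideanSpace ℝ (Fin n) → ℝ) (u : EuclideanSpace ℝ (Fin n) → ℝ → ℝ) : Prop :=
  UpperSemicontinuousOn (fun q : EuclideanSpace ℝ (Fin n) × ℝ => u q.1 q.2) (Dom n T) ∧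
  LinGrowth T u ∧
  (∀ x, u x T ≤ g x) ∧
  ∀ x₀ t₀, t₀ ∈ Set.Ioo 0 T →
    ∀ φ φt Dφ D2φ, IsC12 φ φt Dφ D2φ →
      u x₀ t₀ = φ x₀ t₀ →
      (∀ x t, t ∈ Set.Icc 0 T → (x, t) ≠ (x₀, t₀) → u x t < φ x t) →
      H (u x₀ t₀) (Dφ x₀ t₀) (D2φ x₀ t₀) ≤ φt x₀ t₀

/-- Continuous viscosity solution of `∂ₜ u − H(u,Du,D²u) = 0` with terminal data `g`. -/
def SolH {n : ℕ} (T : ℝ)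
    (H : ℝ → EuclideanSpace ℝ (Fin n) → Matrix (Fin n) (Fin n) ℝ → ℝ)
    (g : EuclideanSpace ℝ (Fin n) → ℝ) (u : EuclideanSpace ℝ (Fin n) → ℝ → ℝ) : Prop :=
  ContOn T u ∧ SuperSolH T H g u ∧ SubSolH T H g u

/-- Viscosity supersolution of `∂ₜ u + F(u,Du,D²u) = 0` with terminal data `g`. -/
def SuperSolF {n : ℕ} (T : ℝ) (σ : Fin n → ℝ) (μ : EuclideanSpace ℝ (Fin n)) (r : ℝ)
    (g : EuclideanSpace ℝ (Fin n) → ℝ) (u : EuclideanSpace ℝ (Fin n) → ℝ → ℝ) : Prop :=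
  LowerSemicontinuousOn (fun q : EuclideanSpace ℝ (Fin n) × ℝ => u q.1 q.2) (Dom n T) ∧
  LinGrowth T u ∧
  (∀ x, g x ≤ u x T) ∧
  ∀ x₀ t₀, t₀ ∈ Set.Ioo 0 T →
    ∀ φ φt Dφ D2φ, IsC12 φ φt Dφ D2φ →
      u x₀ t₀ = φ x₀ t₀ →
      (∀ x t, t ∈ Set.Icc 0 T → (x, t) ≠ (x₀, t₀) → φ x t < u x t) →
      (Dφ x₀ t₀ ≠ 0 →
        φt x₀ t₀ + Fop σ μ r (u x₀ t₀) (Dφ x₀ t₀) (D2φ x₀ t₀) ≤ 0) ∧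
      (Dφ x₀ t₀ = 0 →
        φt x₀ t₀ + Flower σ μ r (u x₀ t₀) (D2φ x₀ t₀) ≤ 0)

/-- Viscosity subsolution of `∂ₜ u + F(u,Du,D²u) = 0` with terminal data `g`. -/
def SubSolF {n : ℕ} (T : ℝ) (σ : Fin n → ℝ) (μ : EuclideanSpace ℝ (Fin n)) (r : ℝ)
    (g : EuclideanSpace ℝ (Fin n) → ℝ) (u : EuclideanSpace ℝ (Fin n) → ℝ → ℝ) : Prop :=
  UpperSemicontinuousOn (fun q : EuclideanSpace ℝ (Fin n) × ℝ => u q.1 q.2) (Dom n T) ∧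
  LinGrowth T u ∧
  (∀ x, u x T ≤ g x) ∧
  ∀ x₀ t₀, t₀ ∈ Set.Ioo 0 T →
    ∀ φ φt Dφ D2φ, IsC12 φ φt Dφ D2φ →
      u x₀ t₀ = φ x₀ t₀ →
      (∀ x t, t ∈ Set.Icc 0 T → (x, t) ≠ (x₀, t₀) → u x t < φ x t) →
      (Dφ x₀ t₀ ≠ 0 →
        0 ≤ φt x₀ t₀ + Fop σ μ r (u x₀ t₀) (Dφ x₀ t₀) (D2φ x₀ t₀)) ∧
      (Dφ x₀ t₀ = 0 →
        0 ≤ φt x₀ t₀ + Fupper σ μ r (u x₀ t₀) (D2φ x₀ t₀))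

/-- Continuous viscosity solution of `∂ₜ u + F(u,Du,D²u) = 0` with terminal data `g`. -/
def SolF {n : ℕ} (T : ℝ) (σ : Fin n → ℝ) (μ : EuclideanSpace ℝ (Fin n)) (r : ℝ)
    (g : EuclideanSpace ℝ (Fin n) → ℝ) (u : EuclideanSpace ℝ (Fin n) → ℝ → ℝ) : Prop :=
  ContOn T u ∧ SuperSolF T σ μ r g u ∧ SubSolF T σ μ r g u

/-- The barrier `w̄(x,t) = g(y) + (A/ε²)(T−t) + 2L(|x−y|² + ε)^{1/2}`. -/
def barrierUp {n : ℕ} (g : EuclideanSpace ℝ (Fin n) → ℝ) (L A ε T : ℝ)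
    (y : EuclideanSpace ℝ (Fin n)) : EuclideanSpace ℝ (Fin n) → ℝ → ℝ :=
  fun x t => g y + (A / ε ^ 2) * (T - t) + 2 * L * Real.sqrt (‖x - y‖ ^ 2 + ε)

/-- The barrier `w̲(x,t) = g(y) − (A/ε²)(T−t) − 2L(|x−y|² + ε)^{1/2}`. -/
def barrierDown {n : ℕ} (g : EuclideanSpace ℝ (Fin n) → ℝ) (L A ε T : ℝ)
    (y : EuclideanSpace ℝ (Fin n)) : EuclideanSpace ℝ (Fin n) → ℝ → ℝ :=
  fun x t => g y - (A / ε ^ 2) * (T - t) - 2 * L * Real.sqrt (‖x - y‖ ^ 2 + ε)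

/-- `Φ̃(θ⁺,θ⁻,d⁺,d⁻,p,M)`: the part of `Φ` sensitive to the inf–sup. -/
def PhiT {n : ℕ} (σ : Fin n → ℝ) (θp θm : EuclideanSpace ℝ (Fin n)) (dp dm : ℝ)
    (p : EuclideanSpace ℝ (Fin n)) (M : Matrix (Fin n) (Fin n) ℝ) : ℝ :=
  -(1 / 2) * sigQF σ M (θp - θm) - (dp + dm) * ⟪θp + θm, p⟫

/-- `sup_{(θ⁻,d⁻)∈ℋ_m} Φ̃(θ⁺,θ⁻,d⁺,d⁻,p,M)` as a function of `a = (θ⁺,d⁺)`. -/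
def supPhiT {n : ℕ} (σ : Fin n → ℝ) (m : ℕ) (a : EuclideanSpace ℝ (Fin n) × ℝ)
    (p : EuclideanSpace ℝ (Fin n)) (M : Matrix (Fin n) (Fin n) ℝ) : ℝ :=
  sSup ((fun b => PhiT σ a.1 b.1 a.2 b.2 p M) '' Hset n m)

/-- `Φ̃_m(p,M) = inf_{(θ⁺,d⁺)∈ℋ_m} sup_{(θ⁻,d⁻)∈ℋ_m} Φ̃`. -/
def PhiTm {n : ℕ} (σ : Fin n → ℝ) (m : ℕ)
    (p : EuclideanSpace ℝ (Fin n)) (M : Matrix (Fin n) (Fin n) ℝ) : ℝ :=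
  sInf ((fun a => supPhiT σ m a p M) '' Hset n m)

/-- The set of values appearing in the parabolic sup-convolution. -/
def supConvSet {n : ℕ} (T ε : ℝ) (u : EuclideanSpace ℝ (Fin n) → ℝ → ℝ)
    (x₀ : EuclideanSpace ℝ (Fin n)) (t₀ : ℝ) : Set ℝ :=
  {y | ∃ x t, t ∈ Set.Icc 0 T ∧ y = u x t - ((t₀ - t) ^ 2 + ‖x₀ - x‖ ^ 2) / (2 * ε)}

/-! Write `Q_M(v) = vᵀ Σ M Σ v`, `K_M` for an entrywise bound of `Σ M Σ`, and `p̂ = p / |p|`.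
Against `(θ⁺, d⁺)` the maximiser may answer `(-θ⁺, 0)`, earning `-2 Q_M(θ⁺)`, or `(-p̂, m)`, earning
at least `m (|p| - θ⁺ · p) - 2 K_M = m |p| |θ⁺ - p̂|² / 2 - 2 K_M`. If `|θ⁺ - p̂| ≤ t` the first
answer is within `4 K_M t` of `-2 Q_M(p̂)`; otherwise the second exceeds `2 K_M` once
`m |p| t² ≥ 8 K_M`. All these bounds are uniform along `p_m → p ≠ 0`, `M_m → M`. -/

lemma le_liminf_of_forall_eventually_sub_le {ι : Type*} {l : Filter ι} [l.NeBot] {u : ι → ℝ}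
    {a b : ℝ} (hb : ∀ᶠ i in l, u i ≤ b) (h : ∀ ε > 0, ∀ᶠ i in l, a - ε ≤ u i) :
    a ≤ liminf u l :=
  le_of_forall_sub_le fun ε hε =>
    le_liminf_of_le (isCoboundedUnder_ge_of_eventually_le l hb) (h ε hε)

section QuadraticForm

variable {n : ℕ} (σ : Fin n → ℝ) (M : Matrix (Fin n) (Fin n) ℝ)

def sigBilin (u v : EuclideanSpace ℝ (Fin n)) : ℝ :=
  ∑ i, ∑ j, (σ i * u i) * M i j * (σ j * v j)

def sigBound : ℝ :=
  ∑ i, ∑ j, |σ i| * |M i j| * |σ j|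

lemma sigBound_nonneg : 0 ≤ sigBound σ M := by
  unfold sigBound; positivity

lemma continuous_sigBound : Continuous fun M : Matrix (Fin n) (Fin n) ℝ => sigBound σ M := by
  unfold sigBound; fun_prop

lemma continuous_sigQF :
    Continuous fun x : Matrix (Fin n) (Fin n) ℝ × EuclideanSpace ℝ (Fin n) => sigQF σ x.1 x.2 := by
  unfold sigQF; fun_prop

lemma abs_sigBilin_le (u v : EuclideanSpace ℝ (Fin n)) :
    |sigBilin σ M u v| ≤ sigBound σ M * (‖u‖ * ‖v‖) := by
  unfold sigBilin sigBound
  simp only [Finset.sum_mul]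
  refine (Finset.abs_sum_le_sum_abs _ _).trans (Finset.sum_le_sum fun i _ => ?_)
  refine (Finset.abs_sum_le_sum_abs _ _).trans (Finset.sum_le_sum fun j _ => ?_)
  have hu : |u i| ≤ ‖u‖ := by simpa using PiLp.norm_apply_le u i
  have hv : |v j| ≤ ‖v‖ := by simpa using PiLp.norm_apply_le v j
  calc |σ i * u i * M i j * (σ j * v j)| = |σ i| * |M i j| * |σ j| * (|u i| * |v j|) := by
        simp only [abs_mul]; ring
    _ ≤ |σ i| * |M i j| * |σ j| * (‖u‖ * ‖v‖) := by gcongr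

lemma abs_sigQF_le (v : EuclideanSpace ℝ (Fin n)) : |sigQF σ M v| ≤ sigBound σ M * ‖v‖ ^ 2 := by
  rw [sq]; exact abs_sigBilin_le σ M v v

lemma abs_sigQF_le_of_norm_le_two {v : EuclideanSpace ℝ (Fin n)} (hv : ‖v‖ ≤ 2) :
    |sigQF σ M v| ≤ 4 * sigBound σ M := by
  have hv2 : ‖v‖ ^ 2 ≤ 2 ^ 2 := pow_le_pow_left₀ (norm_nonneg v) hv 2
  nlinarith [abs_sigQF_le σ M v, sigBound_nonneg σ M]

lemma sigQF_sub_sigQF (u v : EuclideanSpace ℝ (Fin n)) :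
    sigQF σ M u - sigQF σ M v = sigBilin σ M (u - v) u + sigBilin σ M v (u - v) := by
  simp only [sigQF, sigBilin, ← Finset.sum_sub_distrib, ← Finset.sum_add_distrib,
    PiLp.sub_apply]
  refine Finset.sum_congr rfl fun i _ => Finset.sum_congr rfl fun j _ => ?_
  ring

lemma sigQF_sub_sigQF_le {u v : EuclideanSpace ℝ (Fin n)} (hu : ‖u‖ = 1) (hv : ‖v‖ = 1) :
    sigQF σ M u - sigQF σ M v ≤ 2 * sigBound σ M * ‖u - v‖ := by
  have h₁ := abs_sigBilin_le σ M (u - v) u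
  have h₂ := abs_sigBilin_le σ M v (u - v)
  rw [hu] at h₁
  rw [hv] at h₂
  rw [sigQF_sub_sigQF]
  linarith [le_abs_self (sigBilin σ M (u - v) u), le_abs_self (sigBilin σ M v (u - v))]

lemma sigQF_smul (c : ℝ) (v : EuclideanSpace ℝ (Fin n)) :
    sigQF σ M (c • v) = c ^ 2 * sigQF σ M v := by
  simp only [sigQF, Finset.mul_sum, PiLp.smul_apply, smul_eq_mul]
  refine Finset.sum_congr rfl fun i _ => Finset.sum_congr rfl fun j _ => ?_
  ring

lemma sigQF_normalize (v : EuclideanSpace ℝ (Fin n)) :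
    sigQF σ M (NormedSpace.normalize v) = sigQF σ M v / ‖v‖ ^ 2 := by
  rw [NormedSpace.normalize, sigQF_smul, inv_pow, inv_mul_eq_div]

end QuadraticForm

lemma continuousAt_normalize {E : Type*} [NormedAddCommGroup E] [NormedSpace ℝ E] {x : E}
    (hx : x ≠ 0) : ContinuousAt NormedSpace.normalize x :=
  (continuous_norm.continuousAt.inv₀ (norm_ne_zero_iff.mpr hx)).smul continuousAt_id

section Normalize

variable {F : Type*} [NormedAddCommGroup F] [InnerProductSpace ℝ F]

lemma inner_normalize_self (p : F) : ⟪NormedSpace.normalize p, p⟫ = ‖p‖ := by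
  rcases eq_or_ne p 0 with rfl | hp
  · simp
  · rw [NormedSpace.normalize, real_inner_smul_left, real_inner_self_eq_norm_sq]
    field_simp [norm_ne_zero_iff.mpr hp]

lemma abs_inner_le_norm_of_norm_eq_one {θ : F} (hθ : ‖θ‖ = 1) (p : F) : |⟪θ, p⟫| ≤ ‖p‖ := by
  simpa [hθ] using abs_real_inner_le_norm θ p

lemma norm_mul_norm_sub_normalize_sq {θ p : F} (hθ : ‖θ‖ = 1) (hp : p ≠ 0) :
    ‖p‖ * ‖θ - NormedSpace.normalize p‖ ^ 2 = 2 * (‖p‖ - ⟪θ, p⟫) := by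
  have hp' : ‖p‖ ≠ 0 := norm_ne_zero_iff.mpr hp
  rw [norm_sub_sq_real, hθ, NormedSpace.norm_normalize_eq_one_iff.mpr hp,
    NormedSpace.normalize, real_inner_smul_right]
  field_simp
  ring

end Normalize

section Game

variable {n : ℕ} (σ : Fin n → ℝ) {m : ℕ} {p : EuclideanSpace ℝ (Fin n)}
  {M : Matrix (Fin n) (Fin n) ℝ}

lemma normalize_mem_Hset (hp : p ≠ 0) : (NormedSpace.normalize p, (0 : ℝ)) ∈ Hset n m :=
  ⟨NormedSpace.norm_normalize_eq_one_iff.mpr hp, le_rfl, Nat.cast_nonneg m⟩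

lemma neg_mem_Hset {θ : EuclideanSpace ℝ (Fin n)} {d : ℝ} (hθ : ‖θ‖ = 1)
    (hd : d ∈ Set.Icc (0 : ℝ) m) : (-θ, d) ∈ Hset n m :=
  ⟨by rw [norm_neg, hθ], hd⟩

lemma PhiT_neg_self (θ : EuclideanSpace ℝ (Fin n)) (d : ℝ) :
    PhiT σ θ (-θ) d 0 p M = -2 * sigQF σ M θ := by
  rw [PhiT, sub_neg_eq_add, ← two_smul ℝ θ, sigQF_smul, add_neg_cancel, inner_zero_left]
  ring

lemma PhiT_le_two_mul_sigBound {a b : EuclideanSpace ℝ (Fin n) × ℝ} (ha : a ∈ Hset n m)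
    (hb : b ∈ Hset n m) : PhiT σ a.1 b.1 a.2 b.2 p M ≤ 2 * sigBound σ M + 4 * m * ‖p‖ := by
  obtain ⟨ha₁, ha₂, ha₂'⟩ := ha
  obtain ⟨hb₁, hb₂, hb₂'⟩ := hb
  have hsub : ‖a.1 - b.1‖ ≤ 2 := (norm_sub_le _ _).trans (by rw [ha₁, hb₁]; norm_num)
  have hadd : ‖a.1 + b.1‖ ≤ 2 := (norm_add_le _ _).trans (by rw [ha₁, hb₁]; norm_num)
  have hQ := (abs_le.mp (abs_sigQF_le_of_norm_le_two σ M hsub)).1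
  have hinner : -(2 * ‖p‖) ≤ ⟪a.1 + b.1, p⟫ := by
    have := neg_abs_le ⟪a.1 + b.1, p⟫
    nlinarith [abs_real_inner_le_norm (a.1 + b.1) p, norm_nonneg p]
  rw [PhiT]
  nlinarith [mul_le_mul_of_nonneg_left hinner (add_nonneg ha₂ hb₂), norm_nonneg p]

lemma bddAbove_PhiT_image {a : EuclideanSpace ℝ (Fin n) × ℝ} (ha : a ∈ Hset n m) :
    BddAbove ((fun b => PhiT σ a.1 b.1 a.2 b.2 p M) '' Hset n m) :=
  ⟨_, Set.forall_mem_image.mpr fun _ hb => PhiT_le_two_mul_sigBound σ ha hb⟩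

lemma PhiT_le_supPhiT {a b : EuclideanSpace ℝ (Fin n) × ℝ} (ha : a ∈ Hset n m)
    (hb : b ∈ Hset n m) : PhiT σ a.1 b.1 a.2 b.2 p M ≤ supPhiT σ m a p M :=
  le_csSup (bddAbove_PhiT_image σ ha) ⟨b, hb, rfl⟩

lemma neg_two_mul_sigQF_le_supPhiT {a : EuclideanSpace ℝ (Fin n) × ℝ} (ha : a ∈ Hset n m) :
    -2 * sigQF σ M a.1 ≤ supPhiT σ m a p M := by
  simpa [PhiT_neg_self] using PhiT_le_supPhiT σ ha (neg_mem_Hset ha.1 ⟨le_rfl, Nat.cast_nonneg m⟩)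

lemma PhiTm_le_two_mul_sigBound (hp : p ≠ 0) : PhiTm σ m p M ≤ 2 * sigBound σ M := by
  have hbdd : BddBelow ((fun a => supPhiT σ m a p M) '' Hset n m) := by
    refine ⟨-2 * sigBound σ M, Set.forall_mem_image.mpr fun a ha => ?_⟩
    have hQ := (abs_le.mp (abs_sigQF_le σ M a.1)).2
    rw [ha.1] at hQ
    linarith [neg_two_mul_sigQF_le_supPhiT σ (p := p) (M := M) ha]
  refine (csInf_le hbdd ⟨_, normalize_mem_Hset hp, rfl⟩).trans ?_
  refine csSup_le ⟨_, _, normalize_mem_Hset hp, rfl⟩ (Set.forall_mem_image.mpr fun b hb => ?_)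
  obtain ⟨hb₁, hb₂, -⟩ := hb
  have hq := NormedSpace.norm_normalize_eq_one_iff.mpr hp
  have hsub : ‖NormedSpace.normalize p - b.1‖ ≤ 2 :=
    (norm_sub_le _ _).trans (by rw [hq, hb₁]; norm_num)
  have hQ := (abs_le.mp (abs_sigQF_le_of_norm_le_two σ M hsub)).1
  have hinner : 0 ≤ ⟪NormedSpace.normalize p + b.1, p⟫ := by
    rw [inner_add_left, inner_normalize_self]
    linarith [neg_abs_le ⟪b.1, p⟫, abs_inner_le_norm_of_norm_eq_one hb₁ p]
  simp only [PhiT, zero_add]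
  nlinarith [mul_nonneg hb₂ hinner]

lemma neg_two_mul_sigBound_add_le_supPhiT {a : EuclideanSpace ℝ (Fin n) × ℝ} (ha : a ∈ Hset n m)
    (hp : p ≠ 0) : -2 * sigBound σ M + m * (‖p‖ - ⟪a.1, p⟫) ≤ supPhiT σ m a p M := by
  have hq := NormedSpace.norm_normalize_eq_one_iff.mpr hp
  refine le_trans ?_ (PhiT_le_supPhiT σ (b := (-NormedSpace.normalize p, (m : ℝ))) ha
    (neg_mem_Hset hq ⟨Nat.cast_nonneg m, le_rfl⟩))
  obtain ⟨ha₁, ha₂, -⟩ := ha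
  have hadd : ‖a.1 + NormedSpace.normalize p‖ ≤ 2 :=
    (norm_add_le _ _).trans (by rw [ha₁, hq]; norm_num)
  have hQ := (abs_le.mp (abs_sigQF_le_of_norm_le_two σ M hadd)).2
  have hinner : ⟪a.1 + -NormedSpace.normalize p, p⟫ = ⟪a.1, p⟫ - ‖p‖ := by
    rw [inner_add_left, inner_neg_left, inner_normalize_self, sub_eq_add_neg]
  have hgap : 0 ≤ ‖p‖ - ⟪a.1, p⟫ := by
    linarith [le_abs_self ⟪a.1, p⟫, abs_inner_le_norm_of_norm_eq_one ha₁ p]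
  simp only [PhiT, sub_neg_eq_add, hinner]
  nlinarith [mul_nonneg ha₂ hgap]

lemma neg_two_mul_sigQF_normalize_sub_le_PhiTm (hp : p ≠ 0) {K t : ℝ} (hK : sigBound σ M ≤ K)
    (ht : 0 < t) (hm : 4 * K ≤ m * ‖p‖ * t ^ 2 / 2) :
    -2 * sigQF σ M (NormedSpace.normalize p) - 4 * K * t ≤ PhiTm σ m p M := by
  have hq := NormedSpace.norm_normalize_eq_one_iff.mpr hp
  have hK₀ := sigBound_nonneg σ M
  refine le_csInf ⟨_, _, normalize_mem_Hset hp, rfl⟩ (Set.forall_mem_image.mpr fun a ha => ?_)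
  set s := ‖a.1 - NormedSpace.normalize p‖
  rcases le_or_gt s t with hst | hts
  · have hlip := sigQF_sub_sigQF_le σ M ha.1 hq
    have : sigBound σ M * s ≤ K * t := mul_le_mul hK hst (norm_nonneg _) (hK₀.trans hK)
    linarith [neg_two_mul_sigQF_le_supPhiT σ (p := p) (M := M) ha]
  · have hsq := norm_mul_norm_sub_normalize_sq ha.1 hp
    have hQ := (abs_le.mp (abs_sigQF_le σ M (NormedSpace.normalize p))).1
    rw [hq] at hQ
    have : m * ‖p‖ * t ^ 2 ≤ m * (‖p‖ * s ^ 2) := by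
      rw [← mul_assoc]
      gcongr
    nlinarith [neg_two_mul_sigBound_add_le_supPhiT σ (M := M) ha hp]

end Game

theorem liminf_lower_bound_general (n : ℕ)
    (σ : Fin n → ℝ)
    (ps : ℕ → EuclideanSpace ℝ (Fin n)) (Ms : ℕ → Matrix (Fin n) (Fin n) ℝ)
    (p : EuclideanSpace ℝ (Fin n)) (M : Matrix (Fin n) (Fin n) ℝ)
    (hp : p ≠ 0)
    (hpt : Tendsto ps atTop (𝓝 p)) (hMt : Tendsto Ms atTop (𝓝 M)) :
    -(2 * sigQF σ M p / ‖p‖ ^ 2) ≤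
      Filter.liminf (fun m => PhiTm σ m (ps m) (Ms m)) atTop := by
  have hp₀ : 0 < ‖p‖ := norm_pos_iff.mpr hp
  set C := sigBound σ M + 1
  have hC : 0 < C := by linarith [sigBound_nonneg σ M]
  have hK : ∀ᶠ m in atTop, sigBound σ (Ms m) ≤ C :=
    ((continuous_sigBound σ).tendsto M |>.comp hMt).eventually (eventually_le_nhds (by linarith))
  have hps : ∀ᶠ m in atTop, ‖p‖ / 2 ≤ ‖ps m‖ :=
    hpt.norm.eventually (eventually_ge_nhds (by linarith))
  have hQ : Tendsto (fun m => sigQF σ (Ms m) (NormedSpace.normalize (ps m))) atTop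
      (𝓝 (sigQF σ M (NormedSpace.normalize p))) :=
    -- elaborated without the expected type, which would make unification unfold `sigQF`
    (((continuous_sigQF σ).tendsto _).comp
      (hMt.prodMk_nhds ((continuousAt_normalize hp).tendsto.comp hpt)) :)
  rw [mul_div_assoc, ← sigQF_normalize]
  refine le_liminf_of_forall_eventually_sub_le (b := 2 * C) ?_ fun ε hε => ?_
  · filter_upwards [hK, hps] with m hKm hpm
    have : ps m ≠ 0 := norm_pos_iff.mp (by linarith)
    linarith [PhiTm_le_two_mul_sigBound σ (m := m) (M := Ms m) this]
  · obtain ⟨t, ht, hCt⟩ : ∃ t > 0, 4 * C * t = ε / 2 :=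
      ⟨ε / (8 * C), by positivity, by field_simp; ring⟩
    have hQε :=
      hQ.eventually (eventually_le_nhds (lt_add_of_pos_right _ (by positivity : 0 < ε / 4)))
    filter_upwards [hK, hps, hQε,
      tendsto_natCast_atTop_atTop.eventually_ge_atTop (16 * C / (‖p‖ * t ^ 2))]
      with m hKm hpm hQm hm
    have hpm₀ : ps m ≠ 0 := norm_pos_iff.mp (by linarith)
    refine le_trans ?_ (neg_two_mul_sigQF_normalize_sub_le_PhiTm σ hpm₀ hKm ht ?_)
    · linarith
    · rw [div_le_iff₀ (by positivity)] at hm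
      nlinarith [mul_le_mul_of_nonneg_left hpm (by positivity : (0 : ℝ) ≤ m * t ^ 2)]

/-- claim (5.5) in the proof of Lemma 5.1: lower bound in the limit,
`liminf_m Φ̃_m(p_m, M_m) ≥ −2 pᵀΣMΣp / |p|²`. -/
theorem liminf_lower_bound (n : ℕ) (hn : 1 ≤ n)
    (σ : Fin n → ℝ) (hσ : ∀ i, 0 < σ i)
    (ps : ℕ → EuclideanSpace ℝ (Fin n)) (Ms : ℕ → Matrix (Fin n) (Fin n) ℝ)
    (p : EuclideanSpace ℝ (Fin n)) (M : Matrix (Fin n) (Fin n) ℝ)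
    (hMs : ∀ m, (Ms m).IsSymm) (hM : M.IsSymm) (hp : p ≠ 0)
    (hpt : Tendsto ps atTop (𝓝 p)) (hMt : Tendsto Ms atTop (𝓝 M)) :
    -(2 * sigQF σ M p / ‖p‖ ^ 2) ≤
      Filter.liminf (fun m => PhiTm σ m (ps m) (Ms m)) atTop :=
  liminf_lower_bound_general n σ ps Ms p M hp hpt hMt

end TugOfWar
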